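/- arXiv:cmp-lg/9609008 — 2 statements merged into one kernel-verified Lean document; each statement's English description precedes it below -/
import Mathlib

section
/- For every real number p and every natural number n ≥ 0, the half-binomial probability satisfies the closed form B(p, n) = 1/2 + Σ_{i=0}^{⌈n/2⌉ - 1} (p - 1/2)·C(2i, i)·p^i·(1-p)^i (the half-binomial result); in particular, for n = 0 the empty sum gives B(p, 0) = 1/2. -/
/-!
Write `T(n, k) = ∑_{i ≥ k} C(n, i) pⁱ qⁿ⁻ⁱ` for the upper tail of a binomial
distribution. Conditioning on the last trial (Pascal's rule) gives
`T(n+1, k+1) = p T(n, k) + q T(n, k+1)`. With `q = 1 - p`, passing from `2m` to `2m + 1`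
trials turns the half-weighted tie at `m` into a success with probability `p`, so
`B(p, 2m+1) = B(p, 2m) + (p - 1/2) C(2m, m) pᵐ qᵐ`. Passing from `2m + 1` to `2m + 2` trials
changes nothing, because `C(2m+2, m+1) = 2 C(2m+1, m+1)` makes the new half-weighted tie
compensate exactly. The closed form follows by telescoping.
-/

open Finset

/-- Half-binomial probability: the probability that a Binomial(n, p) variable
exceeds n/2, with outcomes exactly equal to n/2 counted with weight 1/2. -/
noncomputable def halfBin (p : ℝ) (n : ℕ) : ℝ :=
  (∑ i ∈ Finset.Icc (n / 2 + 1) n, (n.choose i : ℝ) * p ^ i * (1 - p) ^ (n - i)) +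
    (if Even n then (1 / 2 : ℝ) * (n.choose (n / 2) : ℝ) * p ^ (n / 2) * (1 - p) ^ (n / 2)
     else 0)

section BinomialTail

variable {R : Type*} [CommSemiring R]

def binomialTail (p q : R) (n k : ℕ) : R :=
  ∑ i ∈ Icc k n, (n.choose i : R) * p ^ i * q ^ (n - i)

theorem binomialTail_eq_add {p q : R} {n k : ℕ} (hk : k ≤ n) :
    binomialTail p q n k = n.choose k * p ^ k * q ^ (n - k) + binomialTail p q n (k + 1) := by
  rw [binomialTail, ← add_sum_Ioc_eq_sum_Icc hk, binomialTail, ← Icc_add_one_left_eq_Ioc]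

theorem binomialTail_succ_succ {p q : R} {n k : ℕ} (hk : k ≤ n) :
    binomialTail p q (n + 1) (k + 1) =
      p * binomialTail p q n k + q * binomialTail p q n (k + 1) := by
  have hshift (f : ℕ → R) :
      ∑ i ∈ Icc (k + 1) (n + 1), f i = ∑ j ∈ Icc k n, f (j + 1) := by
    rw [← map_add_right_Icc, sum_map]
    rfl
  have hpascal : ∀ j ∈ Icc k n,
      ((n + 1).choose (j + 1) : R) * p ^ (j + 1) * q ^ (n + 1 - (j + 1)) =
        p * (n.choose j * p ^ j * q ^ (n - j)) +
          n.choose (j + 1) * p ^ (j + 1) * q ^ (n + 1 - (j + 1)) := by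
    intro j _
    rw [Nat.choose_succ_succ, Nat.add_sub_add_right]
    push_cast
    ring
  have hlast : ∑ i ∈ Icc (k + 1) (n + 1), (n.choose i : R) * p ^ i * q ^ (n + 1 - i)
      = q * binomialTail p q n (k + 1) := by
    rw [sum_Icc_succ_top (by omega), Nat.choose_succ_self, Nat.cast_zero, zero_mul, zero_mul,
      add_zero, binomialTail, mul_sum]
    refine sum_congr rfl fun i hi => ?_
    rw [Nat.sub_add_comm (mem_Icc.1 hi).2, pow_succ]
    ring
  rw [hshift] at hlast
  rw [binomialTail, hshift, sum_congr rfl hpascal, sum_add_distrib, ← mul_sum, hlast]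
  rfl

end BinomialTail

namespace halfBin

variable (p : ℝ) (m : ℕ)

theorem two_mul_eq_binomialTail :
    halfBin p (2 * m) =
      binomialTail p (1 - p) (2 * m) (m + 1) + 1 / 2 * (2 * m).choose m * p ^ m * (1 - p) ^ m := by
  rw [halfBin, if_pos (even_two_mul m), Nat.mul_div_cancel_left m two_pos]
  rfl

theorem two_mul_add_one_eq_binomialTail :
    halfBin p (2 * m + 1) = binomialTail p (1 - p) (2 * m + 1) (m + 1) := by
  rw [halfBin, if_neg (Nat.not_even_two_mul_add_one m), add_zero, show (2 * m + 1) / 2 = m by omega]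
  rfl

theorem two_mul_add_one :
    halfBin p (2 * m + 1) =
      halfBin p (2 * m) + (p - 1 / 2) * (2 * m).choose m * p ^ m * (1 - p) ^ m := by
  rw [two_mul_add_one_eq_binomialTail, binomialTail_succ_succ (by omega),
    binomialTail_eq_add (by omega), two_mul_eq_binomialTail, show 2 * m - m = m by omega]
  ring

theorem two_mul_add_two : halfBin p (2 * (m + 1)) = halfBin p (2 * m + 1) := by
  have hcentral : ((2 * m + 2).choose (m + 1) : ℝ) = 2 * (2 * m + 1).choose (m + 1) := by
    rw [Nat.choose_succ_succ' (2 * m + 1), Nat.choose_symm_half]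
    push_cast
    ring
  rw [two_mul_eq_binomialTail, two_mul_add_one_eq_binomialTail, mul_add_one,
    binomialTail_succ_succ (by omega), binomialTail_eq_add (k := m + 1) (by omega), hcentral,
    show 2 * m + 1 - (m + 1) = m by omega]
  ring

theorem two_mul_eq_sum :
    halfBin p (2 * m) =
      1 / 2 + ∑ i ∈ range m, (p - 1 / 2) * ((2 * i).choose i : ℝ) * p ^ i * (1 - p) ^ i := by
  induction m with
  | zero => simp [halfBin]
  | succ m ih => rw [two_mul_add_two, two_mul_add_one, ih, sum_range_succ, add_assoc]

end halfBin

theorem halfBin_closed_form (p : ℝ) (n : ℕ) :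
    halfBin p n =
      1 / 2 +
        ∑ i ∈ Finset.range ((n + 1) / 2),
          (p - 1 / 2) * ((2 * i).choose i : ℝ) * p ^ i * (1 - p) ^ i := by
  obtain ⟨m, rfl | rfl⟩ := Nat.even_or_odd' n
  · rw [show (2 * m + 1) / 2 = m by omega, halfBin.two_mul_eq_sum]
  · rw [show (2 * m + 1 + 1) / 2 = m + 1 by omega, halfBin.two_mul_add_one, halfBin.two_mul_eq_sum,
      sum_range_succ, add_assoc]
end

section
/- For every real number p and every even natural number n ≥ 2, the half-binomial probability satisfies B(p, n) = B(p, n-1). -/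
/-!
Write a Binomial(2m, p) variable as `X + B` with `X` Binomial(2m - 1, p) and `B` an independent
Bernoulli(p) trial. The two ways of tying at `m`, namely `X = m - 1, B = 1` and `X = m, B = 0`,
are equally likely because `C(2m - 1, m - 1) = C(2m - 1, m)`, so half the tie probability is
`(1 - p) P(X = m)`. Adding it to `P(X + B > m) = p P(X ≥ m) + (1 - p) P(X > m)` gives
`P(X ≥ m)`, the half-binomial probability for `2m - 1` trials.
-/

open Finset

section BinomialTerms

variable {R : Type*} [CommRing R]

def binomTerm (p : R) (n i : ℕ) : R := n.choose i * p ^ i * (1 - p) ^ (n - i)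

def binomTail (p : R) (n k : ℕ) : R := ∑ i ∈ Icc k n, binomTerm p n i

lemma binomTerm_eq_zero_of_lt {p : R} {n i : ℕ} (h : n < i) : binomTerm p n i = 0 := by
  simp [binomTerm, Nat.choose_eq_zero_of_lt h]

lemma binomTerm_succ_succ (p : R) (n i : ℕ) :
    binomTerm p (n + 1) (i + 1) = p * binomTerm p n i + (1 - p) * binomTerm p n (i + 1) := by
  rcases lt_or_ge n (i + 1) with h | h
  · rw [binomTerm_eq_zero_of_lt h, binomTerm, binomTerm, Nat.choose_succ_succ,
      Nat.choose_eq_zero_of_lt h, Nat.add_sub_add_right]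
    push_cast
    ring
  · obtain ⟨j, rfl⟩ := Nat.exists_eq_add_of_le h
    simp only [binomTerm, Nat.choose_succ_succ, Nat.cast_add,
      show i + 1 + j + 1 - (i + 1) = j + 1 by omega, show i + 1 + j - i = j + 1 by omega,
      show i + 1 + j - (i + 1) = j by omega]
    ring

lemma binomTerm_two_mul_add_one_symm (p : R) (m : ℕ) :
    p * binomTerm p (2 * m + 1) m = (1 - p) * binomTerm p (2 * m + 1) (m + 1) := by
  simp only [binomTerm, Nat.choose_symm_half, show 2 * m + 1 - m = m + 1 by omega,
    show 2 * m + 1 - (m + 1) = m by omega]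
  ring

lemma binomTail_eq_binomTerm_add {p : R} {n k : ℕ} (h : k ≤ n) :
    binomTail p n k = binomTerm p n k + binomTail p n (k + 1) := by
  rw [binomTail, binomTail, Icc_add_one_left_eq_Ioc, add_sum_Ioc_eq_sum_Icc h]

lemma binomTail_succ_succ (p : R) (n k : ℕ) :
    binomTail p (n + 1) (k + 1) = p * binomTail p n k + (1 - p) * binomTail p n (k + 1) := by
  have shifted_top : ∑ i ∈ Icc k n, binomTerm p n (i + 1) = binomTail p n (k + 1) := calc
    _ = ∑ i ∈ (Icc k n).map (addRightEmbedding 1), binomTerm p n i := (sum_map _ _ _).symm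
    _ = ∑ i ∈ Icc (k + 1) (n + 1), binomTerm p n i := by rw [map_add_right_Icc]
    _ = binomTail p n (k + 1) := by
      refine (sum_subset (Icc_subset_Icc_right n.le_succ) fun i hi hi' => ?_).symm
      simp only [mem_Icc] at hi hi'
      exact binomTerm_eq_zero_of_lt (by omega)
  rw [binomTail, ← map_add_right_Icc k n 1, sum_map]
  simp only [addRightEmbedding_apply, binomTerm_succ_succ, sum_add_distrib, ← mul_sum,
    shifted_top, binomTail]

end BinomialTerms

lemma halfBin_two_mul (p : ℝ) (m : ℕ) :
    halfBin p (2 * m) = binomTail p (2 * m) (m + 1) + binomTerm p (2 * m) m / 2 := by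
  simp only [halfBin, binomTail, binomTerm, if_pos (even_two_mul m),
    Nat.mul_div_cancel_left m two_pos, show 2 * m - m = m by omega]
  ring

lemma halfBin_two_mul_add_one (p : ℝ) (m : ℕ) :
    halfBin p (2 * m + 1) = binomTail p (2 * m + 1) (m + 1) := by
  simp only [halfBin, binomTail, binomTerm, if_neg (Nat.not_even_two_mul_add_one m), add_zero,
    show (2 * m + 1) / 2 = m by omega]

theorem halfBin_even_general (p : ℝ) (n : ℕ) (hev : Even n) :
    halfBin p n = halfBin p (n - 1) := by
  obtain ⟨m, rfl⟩ := hev.two_dvd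
  rcases m with _ | m
  · rfl
  rw [halfBin_two_mul, show 2 * (m + 1) - 1 = 2 * m + 1 by omega, halfBin_two_mul_add_one,
    show 2 * (m + 1) = 2 * m + 1 + 1 by ring, binomTail_succ_succ, binomTerm_succ_succ,
    binomTail_eq_binomTerm_add (by omega : m + 1 ≤ 2 * m + 1)]
  linear_combination (binomTerm_two_mul_add_one_symm p m) / 2

theorem halfBin_even (p : ℝ) (n : ℕ) (hn : 2 ≤ n) (hev : Even n) :
    halfBin p n = halfBin p (n - 1) :=
  halfBin_even_general p n hev
end
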